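/- arXiv:2005.04086 — 2 statements merged into one kernel-verified Lean document; each statement's English description precedes it below -/
import Mathlib

section
/- Let J : ℝ^{2n} → M_{2n}(ℝ) be a continuous matrix-valued function with J(z)² = −id for all z. Let f : 𝔻 → ℝ^{2n} be a C¹ map on the open unit disc 𝔻 ⊂ ℂ satisfying f_x + J(f) f_y = 0 (i.e., f is J-holomorphic). Then both V = f_x and V = f_y satisfy the linearized equation D(V) := V_x + J(f)V_y + d_fJ(V) f_y = 0, where d_fJ(V)(ζ) denotes the derivative of z ↦ J(z) at f(ζ) applied to V(ζ). (Assume f and J are C².) -/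
open Metric Filter Topology

/-! Differentiating the identity `f_x + J(f) f_y = 0` in a direction `w` by the chain and product
rules gives `∂_w f_x + J(f) ∂_w f_y + (d_f J)(∂_w f) f_y = 0`. For `w = x` and `w = y` this is the
linearized equation for `V = f_x` and `V = f_y` respectively, once the mixed partials
`∂_y f_x = ∂_x f_y` are identified by the symmetry of the second derivative of a `C²` map. -/

section

variable {𝕜 : Type*} [NontriviallyNormedField 𝕜]
  {E F : Type*} [NormedAddCommGroup E] [NormedSpace 𝕜 E] [NormedAddCommGroup F] [NormedSpace 𝕜 F]

theorem fderiv_add_clm_apply_eq_zero_of_eventually_eq_zero {a b f : E → F} {J : F → F →L[𝕜] F}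
    {x : E} (ha : DifferentiableAt 𝕜 a x) (hb : DifferentiableAt 𝕜 b x)
    (hf : DifferentiableAt 𝕜 f x) (hJ : DifferentiableAt 𝕜 J (f x))
    (h : ∀ᶠ y in 𝓝 x, a y + J (f y) (b y) = 0) (w : E) :
    fderiv 𝕜 a x w + J (f x) (fderiv 𝕜 b x w) + fderiv 𝕜 J (f x) (fderiv 𝕜 f x w) (b x) = 0 := by
  have hderiv := ha.hasFDerivAt.add
    ((hJ.hasFDerivAt.comp x hf.hasFDerivAt).clm_apply hb.hasFDerivAt)
  have hzero : HasFDerivAt (fun y => a y + J (f y) (b y)) (0 : E →L[𝕜] F) x :=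
    (hasFDerivAt_const 0 x).congr_of_eventuallyEq h
  simpa [add_assoc] using DFunLike.congr_fun (hderiv.unique hzero) w

theorem ContDiffAt.differentiableAt_fderiv_apply {f : E → F} {x : E} (hf : ContDiffAt 𝕜 2 f x)
    (v : E) : DifferentiableAt 𝕜 (fun y => fderiv 𝕜 f y v) x :=
  ((hf.fderiv_right le_rfl).differentiableAt one_ne_zero).clm_apply (differentiableAt_const v)

theorem ContDiffAt.fderiv_fderiv_apply_comm [IsRCLikeNormedField 𝕜] {f : E → F} {x : E}
    (hf : ContDiffAt 𝕜 2 f x) (v w : E) :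
    fderiv 𝕜 (fun y => fderiv 𝕜 f y v) x w = fderiv 𝕜 (fun y => fderiv 𝕜 f y w) x v := by
  have hd : DifferentiableAt 𝕜 (fderiv 𝕜 f) x :=
    (hf.fderiv_right le_rfl).differentiableAt one_ne_zero
  rw [fderiv_clm_apply hd (differentiableAt_const v),
    fderiv_clm_apply hd (differentiableAt_const w)]
  simpa using hf.isSymmSndFDerivAt (by simp) w v

end

theorem fx_fy_variational_fields_general {n : ℕ}
    (J : (Fin (2 * n) → ℝ) → ((Fin (2 * n) → ℝ) →L[ℝ] (Fin (2 * n) → ℝ)))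
    (hJsmooth : ContDiff ℝ 2 J)
    (f : ℂ → (Fin (2 * n) → ℝ))
    (hf : ContDiffOn ℝ 2 f (ball (0 : ℂ) 1))
    (hJhol : ∀ ζ ∈ ball (0 : ℂ) 1,
      fderiv ℝ f ζ 1 + J (f ζ) (fderiv ℝ f ζ Complex.I) = 0) :
    (∀ ζ ∈ ball (0 : ℂ) 1,
      (fderiv ℝ (fun w => fderiv ℝ f w 1) ζ 1)
        + J (f ζ) (fderiv ℝ (fun w => fderiv ℝ f w 1) ζ Complex.I)
        + (fderiv ℝ J (f ζ) (fderiv ℝ f ζ 1)) (fderiv ℝ f ζ Complex.I) = 0) ∧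
    (∀ ζ ∈ ball (0 : ℂ) 1,
      (fderiv ℝ (fun w => fderiv ℝ f w Complex.I) ζ 1)
        + J (f ζ) (fderiv ℝ (fun w => fderiv ℝ f w Complex.I) ζ Complex.I)
        + (fderiv ℝ J (f ζ) (fderiv ℝ f ζ Complex.I)) (fderiv ℝ f ζ Complex.I) = 0) := by
  have differentiated : ∀ ζ ∈ ball (0 : ℂ) 1, ContDiffAt ℝ 2 f ζ ∧ ∀ w : ℂ,
      fderiv ℝ (fun y => fderiv ℝ f y 1) ζ w
        + J (f ζ) (fderiv ℝ (fun y => fderiv ℝ f y Complex.I) ζ w)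
        + fderiv ℝ J (f ζ) (fderiv ℝ f ζ w) (fderiv ℝ f ζ Complex.I) = 0 := by
    intro ζ hζ
    have hf2 : ContDiffAt ℝ 2 f ζ := hf.contDiffAt (isOpen_ball.mem_nhds hζ)
    exact ⟨hf2, fderiv_add_clm_apply_eq_zero_of_eventually_eq_zero
      (hf2.differentiableAt_fderiv_apply 1) (hf2.differentiableAt_fderiv_apply Complex.I)
      (hf2.differentiableAt two_ne_zero) (hJsmooth.differentiable two_ne_zero (f ζ))
      (eventually_of_mem (isOpen_ball.mem_nhds hζ) hJhol)⟩
  refine ⟨fun ζ hζ => ?_, fun ζ hζ => ?_⟩ <;> obtain ⟨hf2, hD⟩ := differentiated ζ hζ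
  · rw [hf2.fderiv_fderiv_apply_comm 1 Complex.I]
    exact hD 1
  · rw [← hf2.fderiv_fderiv_apply_comm 1 Complex.I]
    exact hD Complex.I

/-- If `f` is a `J`-holomorphic disc (`f_x + J(f) f_y = 0`) for an almost complex
structure `J` (i.e. `J(z)² = -id`), then both partial derivative fields `V = f_x` and
`V = f_y` satisfy the linearized equation `V_x + J(f) V_y + (d_f J)(V) f_y = 0`. -/
theorem fx_fy_variational_fields {n : ℕ}
    (J : (Fin (2 * n) → ℝ) → ((Fin (2 * n) → ℝ) →L[ℝ] (Fin (2 * n) → ℝ)))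
    (hJ2 : ∀ z, (J z).comp (J z) = -ContinuousLinearMap.id ℝ (Fin (2 * n) → ℝ))
    (hJsmooth : ContDiff ℝ 2 J)
    (f : ℂ → (Fin (2 * n) → ℝ))
    (hf : ContDiffOn ℝ 2 f (ball (0 : ℂ) 1))
    (hJhol : ∀ ζ ∈ ball (0 : ℂ) 1,
      fderiv ℝ f ζ 1 + J (f ζ) (fderiv ℝ f ζ Complex.I) = 0) :
    (∀ ζ ∈ ball (0 : ℂ) 1,
      (fderiv ℝ (fun w => fderiv ℝ f w 1) ζ 1)
        + J (f ζ) (fderiv ℝ (fun w => fderiv ℝ f w 1) ζ Complex.I)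
        + (fderiv ℝ J (f ζ) (fderiv ℝ f ζ 1)) (fderiv ℝ f ζ Complex.I) = 0) ∧
    (∀ ζ ∈ ball (0 : ℂ) 1,
      (fderiv ℝ (fun w => fderiv ℝ f w Complex.I) ζ 1)
        + J (f ζ) (fderiv ℝ (fun w => fderiv ℝ f w Complex.I) ζ Complex.I)
        + (fderiv ℝ J (f ζ) (fderiv ℝ f ζ Complex.I)) (fderiv ℝ f ζ Complex.I) = 0) :=
  fx_fy_variational_fields_general J hJsmooth f hf hJhol
end

section
/- Let J be a real 2n×2n matrix with J² = −id and det(J + J_st) ≠ 0, where J_st is the standard complex structure matrix. Define A(v) = (J + J_st)^{-1}(J − J_st)(v̄) for v ∈ ℂⁿ ≅ ℝ^{2n}, where v̄ denotes complex conjugation. Then the map v ↦ A(v) is complex linear, i.e., A(J_st v) = J_st A(v) for all v. -/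
/-- Auxiliary purely ring-theoretic fact in a (noncommutative) ℝ-algebra. -/
theorem clm_key_identity {R : Type*} [Ring R] [Module ℝ R] (J Jst G : R)
    (hJ2 : J * J = -1) (hJst2 : Jst * Jst = -1)
    (hG1 : G * (J + Jst) = 1) (hG2 : (J + Jst) * G = 1) :
    G * (J - Jst) * Jst = -(Jst * (G * (J - Jst))) := by
  -- `J - Jst` anticommutes with `J + Jst`
  have h1 : (J - Jst) * (J + Jst) = -((J + Jst) * (J - Jst)) := by
    have e : (J - Jst) * (J + Jst) + (J + Jst) * (J - Jst) = 0 := by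
      have e' : (J - Jst) * (J + Jst) + (J + Jst) * (J - Jst)
          = 2 * (J * J) - 2 * (Jst * Jst) := by noncomm_ring
      rw [e', hJ2, hJst2]; noncomm_ring
    exact eq_neg_of_add_eq_zero_left e
  -- hence `G` anticommutes with `J - Jst`
  have hGS : G * (J - Jst) = -((J - Jst) * G) := by
    calc G * (J - Jst) = (G * (J - Jst)) * ((J + Jst) * G) := by rw [hG2, mul_one]
    _ = (G * ((J - Jst) * (J + Jst))) * G := by noncomm_ring
    _ = (G * -((J + Jst) * (J - Jst))) * G := by rw [h1]
    _ = -((G * (J + Jst)) * ((J - Jst) * G)) := by noncomm_ring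
    _ = -((J - Jst) * G) := by rw [hG1, one_mul]
  have hSG : (J - Jst) * G = -(G * (J - Jst)) := by rw [hGS, neg_neg]
  -- `G * Jst = J * G`
  have e1 : G * J + G * Jst = 1 := by rw [← mul_add, hG1]
  have e2 : J * G + Jst * G = 1 := by rw [← add_mul, hG2]
  have h6 : G * J - G * Jst = Jst * G - J * G := by
    have h5 := hGS
    rw [mul_sub, sub_mul, neg_sub] at h5
    exact h5
  have hbb : G * Jst + G * Jst = J * G + J * G := by
    calc G * Jst + G * Jst = (G * J + G * Jst) - (G * J - G * Jst) := by abel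
    _ = 1 - (Jst * G - J * G) := by rw [e1, h6]
    _ = (J * G + Jst * G) - (Jst * G - J * G) := by rw [e2]
    _ = J * G + J * G := by abel
  have hGJst : G * Jst = J * G := by
    have h2s : (2 : ℝ) • (G * Jst) = (2 : ℝ) • (J * G) := by
      rw [two_smul ℝ (G * Jst), two_smul ℝ (J * G)]; exact hbb
    exact smul_right_injective R two_ne_zero h2s
  -- `(J - Jst) * J = -(Jst * (J - Jst))`
  have hSJ : (J - Jst) * J = -(Jst * (J - Jst)) := by
    have h7 : (J - Jst) * J + Jst * (J - Jst) = 0 := by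
      have h7' : (J - Jst) * J + Jst * (J - Jst) = J * J - Jst * Jst := by noncomm_ring
      rw [h7', hJ2, hJst2]; noncomm_ring
    exact eq_neg_of_add_eq_zero_left h7
  -- conclude
  calc G * (J - Jst) * Jst = -((J - Jst) * (G * Jst)) := by rw [hGS]; noncomm_ring
  _ = -((J - Jst) * (J * G)) := by rw [hGJst]
  _ = -(((J - Jst) * J) * G) := by rw [← mul_assoc]
  _ = -(-(Jst * (J - Jst)) * G) := by rw [hSJ]
  _ = Jst * ((J - Jst) * G) := by noncomm_ring
  _ = Jst * -(G * (J - Jst)) := by rw [hSG]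
  _ = -(Jst * (G * (J - Jst))) := by noncomm_ring

/-- The Cauchy–Riemann-type operator coefficient `A(v) = (J + J_st)⁻¹ (J − J_st)(v̄)` is
complex linear: `A (i • v) = i • A v`. Here `J` is a real-linear complex structure on
`ℂⁿ` (i.e. `J² = -id`) such that `J + J_st` is invertible (with real-linear inverse `G`),
`J_st` is multiplication by `i`, and `v̄` is componentwise conjugation. -/
theorem A_is_complex_linear {n : ℕ}
    (J G : (Fin n → ℂ) →L[ℝ] (Fin n → ℂ))
    (Jst : (Fin n → ℂ) →L[ℝ] (Fin n → ℂ))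
    (hJst : ∀ v, Jst v = Complex.I • v)
    (hJ2 : J.comp J = -ContinuousLinearMap.id ℝ (Fin n → ℂ))
    (hG1 : G.comp (J + Jst) = ContinuousLinearMap.id ℝ (Fin n → ℂ))
    (hG2 : (J + Jst).comp G = ContinuousLinearMap.id ℝ (Fin n → ℂ))
    (A : (Fin n → ℂ) → (Fin n → ℂ))
    (hA : A = fun v => G ((J - Jst) (fun j => starRingEnd ℂ (v j)))) :
    ∀ v : Fin n → ℂ, A (Complex.I • v) = Complex.I • A v := by
  intro v
  have hJstm : Jst * Jst = -1 := by
    ext u i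
    simp only [ContinuousLinearMap.mul_apply, hJst, Pi.smul_apply, smul_eq_mul,
      ContinuousLinearMap.neg_apply, ContinuousLinearMap.one_apply, Pi.neg_apply]
    rw [← mul_assoc, Complex.I_mul_I, neg_one_mul]
  have hkey := clm_key_identity J Jst G hJ2 hJstm hG1 hG2
  set w : Fin n → ℂ := fun j => starRingEnd ℂ (v j) with hw
  have hconj : (fun j => starRingEnd ℂ ((Complex.I • v) j)) = -(Jst w) := by
    funext j
    simp only [hJst, hw, Pi.smul_apply, Pi.neg_apply, map_mul, Complex.conj_I, smul_eq_mul]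
    ring
  rw [hA]
  simp only [hconj, map_neg]
  have hk := ContinuousLinearMap.ext_iff.mp hkey w
  simp only [ContinuousLinearMap.mul_apply] at hk
  rw [hk]
  simp only [ContinuousLinearMap.neg_apply, ContinuousLinearMap.mul_apply, neg_neg, hJst]
  rfl
end
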